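/- Let ℓ_{n,k} be the polynomial of degree at most n with ∫_{t_j}^{t_{j+1}} ℓ_{n,k}(t) dt = δ_{jk} for nodes -1 = t_0 < ... < t_{n+1} = 1. Then ℓ_{n,k} has exactly n roots in (-1,1), with exactly one simple root in each open interval (t_j, t_{j+1}) for each j ≠ k. -/

import Mathlib

/-!
The primitive of `ℓ` vanishes at both ends of every interval `(t j, t (j+1))` with `j ≠ k`, so by
Rolle `ℓ` has a root inside each of these `n` disjoint intervals. A nonzero polynomial of degree at
most `n` with `n` distinct roots has no other roots, and all of them are simple.
-/

open Polynomial Set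

theorem exists_mem_Ioo_eq_zero_of_intervalIntegral_eq_zero {f : ℝ → ℝ} (hf : Continuous f)
    {a b : ℝ} (hab : a < b) (h : ∫ x in a..b, f x = 0) : ∃ c ∈ Ioo a b, f c = 0 := by
  set F : ℝ → ℝ := fun x => ∫ s in a..x, f s
  have hF : Continuous F :=
    intervalIntegral.continuous_primitive (fun _ _ => hf.intervalIntegrable _ _) a
  obtain ⟨c, hc, hc0⟩ :=
    exists_deriv_eq_zero hab hF.continuousOn (intervalIntegral.integral_same.trans h.symm)
  exact ⟨c, hc, hf.deriv_integral f a c ▸ hc0⟩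

theorem Fin.eq_of_mem_Ioo_castSucc_succ {α : Type*} [Preorder α] {m : ℕ} {t : Fin (m + 1) → α}
    (ht : Monotone t) {i j : Fin m} {x : α} (hi : x ∈ Ioo (t i.castSucc) (t i.succ))
    (hj : x ∈ Ioo (t j.castSucc) (t j.succ)) : i = j := by
  by_contra hne
  rcases lt_or_gt_of_ne hne with hlt | hlt
  · exact lt_irrefl x ((hi.2.trans_le (ht (Fin.succ_le_castSucc_iff.2 hlt))).trans hj.1)
  · exact lt_irrefl x ((hj.2.trans_le (ht (Fin.succ_le_castSucc_iff.2 hlt))).trans hi.1)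

theorem Polynomial.roots_eq_val_of_natDegree_le_card {R : Type*} [CommRing R] [IsDomain R]
    {p : R[X]} (hp : p ≠ 0) {s : Finset R} (hs : ∀ x ∈ s, p.IsRoot x)
    (hdeg : p.natDegree ≤ s.card) : p.roots = s.val :=
  (Multiset.eq_of_le_of_card_le
    ((Multiset.le_iff_subset s.nodup).2 fun x hx => (mem_roots hp).2 (hs x hx))
    (p.card_roots'.trans hdeg)).symm

theorem basis_roots_general (n : ℕ) (t : Fin (n + 2) → ℝ)
    (ht : StrictMono t)
    (k : Fin (n + 1)) (ℓ : ℝ[X]) (hdeg : ℓ.degree ≤ n)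
    (hint : ∀ j : Fin (n + 1),
      (∫ x in (t j.castSucc)..(t j.succ), ℓ.eval x) = if j = k then 1 else 0) :
    (∀ j : Fin (n + 1), j ≠ k →
      ∃! τ, τ ∈ Set.Ioo (t j.castSucc) (t j.succ) ∧ ℓ.eval τ = 0 ∧
        ℓ.rootMultiplicity τ = 1) ∧
    ∀ τ ∈ Set.Ioo (-1 : ℝ) 1, ℓ.eval τ = 0 →
      ∃ j : Fin (n + 1), j ≠ k ∧ τ ∈ Set.Ioo (t j.castSucc) (t j.succ) := by
  have hℓ : ℓ ≠ 0 := by rintro rfl; simpa using hint k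
  have hroot (j : {j // j ≠ k}) : ∃ τ ∈ Ioo (t j.1.castSucc) (t j.1.succ), ℓ.eval τ = 0 :=
    exists_mem_Ioo_eq_zero_of_intervalIntegral_eq_zero ℓ.continuous
      (ht Fin.castSucc_lt_succ) (by simpa [j.2] using hint j)
  choose τ hτ hτ0 using hroot
  have hsame {i : {j // j ≠ k}} {j : Fin (n + 1)} {x : ℝ}
      (hx : x ∈ Ioo (t j.castSucc) (t j.succ)) (hxi : x = τ i) : i.1 = j :=
    Fin.eq_of_mem_Ioo_castSucc_succ ht.monotone (hxi ▸ hτ i) hx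
  have hroots : ℓ.roots = (Finset.univ.image τ).val := by
    refine roots_eq_val_of_natDegree_le_card hℓ (Finset.forall_mem_image.2 fun i _ => hτ0 i) ?_
    rw [Finset.card_image_of_injective _ fun i j h => Subtype.ext (hsame (hτ j) h.symm)]
    simpa using natDegree_le_of_degree_le hdeg
  have hmem {x : ℝ} (hx : ℓ.eval x = 0) : ∃ i, x = τ i := by
    simpa [hroots, eq_comm] using (mem_roots hℓ).2 hx
  refine ⟨fun j hj => ⟨τ ⟨j, hj⟩, ⟨hτ ⟨j, hj⟩, hτ0 _, ?_⟩, ?_⟩, fun x _ hx => ?_⟩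
  · rw [← count_roots, hroots]
    exact Multiset.count_eq_one_of_mem (Finset.univ.image τ).nodup (by simp)
  · rintro y ⟨hy, hy0, -⟩
    obtain ⟨i, rfl⟩ := hmem hy0
    obtain rfl : i = ⟨j, hj⟩ := Subtype.ext (hsame hy rfl)
    rfl
  · obtain ⟨i, rfl⟩ := hmem hx
    exact ⟨i.1, i.2, hτ i⟩

theorem basis_roots (n : ℕ) (t : Fin (n + 2) → ℝ)
    (ht : StrictMono t) (ht0 : t 0 = -1) (htN : t (Fin.last (n + 1)) = 1)
    (k : Fin (n + 1)) (ℓ : ℝ[X]) (hdeg : ℓ.degree ≤ n)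
    (hint : ∀ j : Fin (n + 1),
      (∫ x in (t j.castSucc)..(t j.succ), ℓ.eval x) = if j = k then 1 else 0) :
    (∀ j : Fin (n + 1), j ≠ k →
      ∃! τ, τ ∈ Set.Ioo (t j.castSucc) (t j.succ) ∧ ℓ.eval τ = 0 ∧
        ℓ.rootMultiplicity τ = 1) ∧
    ∀ τ ∈ Set.Ioo (-1 : ℝ) 1, ℓ.eval τ = 0 →
      ∃ j : Fin (n + 1), j ≠ k ∧ τ ∈ Set.Ioo (t j.castSucc) (t j.succ) :=
  basis_roots_general n t ht k ℓ hdeg hint
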